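/- Let $\omega:\mathbb{R}\to\mathbb{R}$ be continuous with $\lim_{t\to\pm\infty}|\omega(t)|/|t|=0$ and set $z(t) = -\int_{-\infty}^0 e^{\tau}\omega(\tau+t)\,d\tau + \omega(t)$. Then $z$ has sublinear growth: $\lim_{t\to\pm\infty} |z(t)|/|t| = 0$. -/
import Mathlib


open MeasureTheory Filter Topology

section OUAux

private lemma ou_exp_half_int : IntegrableOn (fun τ : ℝ => Real.exp (τ/2)) (Set.Iic 0) := by
  apply integrableOn_Iic_of_intervalIntegral_norm_bounded (f := fun τ : ℝ => Real.exp (τ/2))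
    (a := fun i : ℝ => i) (l := atBot) 2 0
  · intro i
    exact (Real.continuous_exp.comp (continuous_id.div_const 2)).integrableOn_Ioc
  · exact tendsto_id
  · filter_upwards with i
    have hnorm : (∫ x in i..0, ‖Real.exp (x/2)‖) = ∫ x in i..0, Real.exp (x/2) := by
      congr 1; ext x; exact Real.norm_of_nonneg (Real.exp_pos _).le
    rw [hnorm]
    have h2 : (∫ x in i..0, Real.exp (x/2)) = 2 * (Real.exp 0 - Real.exp (i/2)) := by
      have := intervalIntegral.integral_comp_div (a := i) (b := 0) (c := 2)
        (f := Real.exp) two_ne_zero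
      rw [this, integral_exp]
      simp
    rw [h2]
    nlinarith [Real.exp_pos (i/2), Real.exp_zero]

private lemma ou_sublin_bound (ω : ℝ → ℝ) (hcont : Continuous ω)
    (hsubTop : Tendsto (fun t => |ω t| / |t|) atTop (𝓝 0))
    (hsubBot : Tendsto (fun t => |ω t| / |t|) atBot (𝓝 0))
    {ε : ℝ} (hε : 0 < ε) : ∃ C > 0, ∀ s, |ω s| ≤ ε * |s| + C := by
  obtain ⟨M₁, hM₁⟩ := eventually_atTop.1 (hsubTop.eventually_lt_const hε)
  obtain ⟨M₂, hM₂⟩ := eventually_atBot.1 (hsubBot.eventually_lt_const hε)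
  set M : ℝ := max 1 (max |M₁| |M₂|) with hM
  have hM1 : (1:ℝ) ≤ M := le_max_left _ _
  obtain ⟨C, hC⟩ := (isCompact_Icc (a := -M) (b := M)).exists_bound_of_continuousOn
    hcont.continuousOn
  refine ⟨|C| + 1, by positivity, fun s => ?_⟩
  rcases le_or_gt |s| M with h | h
  · have hs : s ∈ Set.Icc (-M) M := abs_le.1 h
    have := hC s hs
    rw [Real.norm_eq_abs] at this
    have h2 : C ≤ |C| := le_abs_self C
    nlinarith [abs_nonneg s]
  · rcases le_or_gt 0 s with hs | hs
    · have hsM : M₁ ≤ s := by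
        have h1 : |M₁| ≤ M := le_trans (le_max_left _ _) (le_max_right _ _)
        have h2 := le_abs_self M₁
        rw [abs_of_nonneg hs] at h
        linarith
      have := hM₁ s hsM
      have hspos : 0 < |s| := lt_of_lt_of_le (by linarith) h.le
      rw [div_lt_iff₀ hspos] at this
      nlinarith [abs_nonneg C]
    · have hsM : s ≤ M₂ := by
        have h1 : |M₂| ≤ M := le_trans (le_max_right _ _) (le_max_right _ _)
        have h2 := neg_abs_le M₂
        rw [abs_of_neg hs] at h
        linarith
      have := hM₂ s hsM
      have hspos : 0 < |s| := lt_of_lt_of_le (by linarith) h.le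
      rw [div_lt_iff₀ hspos] at this
      nlinarith [abs_nonneg C]

private lemma ou_tau_exp_bound {τ : ℝ} (hτ : τ ≤ 0) : |τ| * Real.exp τ ≤ 2 * Real.exp (τ/2) := by
  rw [abs_of_nonpos hτ]
  have h1 : -τ/2 + 1 ≤ Real.exp (-τ/2) := Real.add_one_le_exp _
  have h2 : -τ ≤ 2 * Real.exp (-τ/2) := by linarith [Real.exp_pos (-τ/2)]
  have h3 : Real.exp τ = Real.exp (τ/2) * Real.exp (τ/2) := by
    rw [← Real.exp_add]; ring_nf
  have h4 : Real.exp (-τ/2) * Real.exp (τ/2) = 1 := by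
    rw [← Real.exp_add]; ring_nf; exact Real.exp_zero
  have hp := Real.exp_pos (τ/2)
  calc -τ * Real.exp τ = (-τ * Real.exp (τ/2)) * Real.exp (τ/2) := by rw [h3]; ring
    _ ≤ (2 * Real.exp (-τ/2) * Real.exp (τ/2)) * Real.exp (τ/2) := by
        have : -τ * Real.exp (τ/2) ≤ 2 * Real.exp (-τ/2) * Real.exp (τ/2) :=
          mul_le_mul_of_nonneg_right h2 hp.le
        exact mul_le_mul_of_nonneg_right this hp.le
    _ = 2 * Real.exp (τ/2) := by rw [mul_assoc 2, h4]; ring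

private lemma ou_integral_bound (ω : ℝ → ℝ) (hcont : Continuous ω) {ε C : ℝ}
    (hε : 0 < ε) (hC : 0 < C) (hb : ∀ s, |ω s| ≤ ε * |s| + C) :
    ∃ K ≥ 0, ∀ t, |∫ τ in Set.Iic (0:ℝ), Real.exp τ * ω (τ + t)| ≤ ε * |t| + K := by
  set K₀ : ℝ := ∫ τ in Set.Iic (0:ℝ), 2 * Real.exp (τ/2) with hK₀
  have hK₀nn : 0 ≤ K₀ := by
    apply setIntegral_nonneg measurableSet_Iic
    intro x _; positivity
  refine ⟨ε * K₀ + C, by positivity, fun t => ?_⟩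
  set g : ℝ → ℝ := fun τ => Real.exp τ * ω (τ + t) with hg
  set h : ℝ → ℝ := fun τ => ε * (2 * Real.exp (τ/2)) + (ε * |t| + C) * Real.exp τ with hh
  have hint : IntegrableOn h (Set.Iic 0) :=
    ((ou_exp_half_int.const_mul 2).const_mul ε).add ((integrableOn_exp_Iic 0).const_mul _)
  have hbound : ∀ τ ∈ Set.Iic (0:ℝ), ‖g τ‖ ≤ h τ := by
    intro τ hτ
    have he := Real.exp_pos τ
    have h1 : ‖g τ‖ = Real.exp τ * |ω (τ + t)| := by
      rw [Real.norm_eq_abs, abs_mul, abs_of_pos he]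
    rw [h1]
    have h2 : |ω (τ + t)| ≤ ε * |τ| + ε * |t| + C := by
      have := hb (τ + t)
      have := abs_add_le τ t
      nlinarith
    have h3 : Real.exp τ * |ω (τ + t)| ≤ ε * (|τ| * Real.exp τ) + (ε * |t| + C) * Real.exp τ := by
      nlinarith
    refine h3.trans ?_
    have := ou_tau_exp_bound (hτ : τ ≤ 0)
    simp only [hh]
    nlinarith
  have hgint : IntegrableOn g (Set.Iic 0) := by
    apply Integrable.mono' hint
    · exact ((Real.continuous_exp.mul
        (hcont.comp (continuous_id.add continuous_const)))).aestronglyMeasurable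
    · filter_upwards [ae_restrict_mem measurableSet_Iic] with τ hτ using hbound τ hτ
  have step1 : |∫ τ in Set.Iic (0:ℝ), g τ| ≤ ∫ τ in Set.Iic (0:ℝ), h τ := by
    calc |∫ τ in Set.Iic (0:ℝ), g τ| ≤ ∫ τ in Set.Iic (0:ℝ), ‖g τ‖ :=
          norm_integral_le_integral_norm g
      _ ≤ ∫ τ in Set.Iic (0:ℝ), h τ :=
          setIntegral_mono_on hgint.norm hint measurableSet_Iic hbound
  have step2 : (∫ τ in Set.Iic (0:ℝ), h τ) = ε * K₀ + (ε * |t| + C) := by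
    rw [hh]
    rw [integral_add (((ou_exp_half_int.const_mul 2).const_mul ε))
      ((integrableOn_exp_Iic 0).const_mul _)]
    rw [integral_const_mul, integral_const_mul, integral_const_mul, integral_exp_Iic_zero, hK₀,
      integral_const_mul]
    ring
  calc |∫ τ in Set.Iic (0:ℝ), Real.exp τ * ω (τ + t)| = |∫ τ in Set.Iic (0:ℝ), g τ| := rfl
    _ ≤ ε * K₀ + (ε * |t| + C) := step2 ▸ step1
    _ = ε * |t| + (ε * K₀ + C) := by ring

private lemma ou_tendsto_aux (f w : ℝ → ℝ) (l : Filter ℝ)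
    (hl : Tendsto (fun t : ℝ => |t|) l atTop)
    (hw : Tendsto (fun t => |w t| / |t|) l (𝓝 0))
    (hb : ∀ ε > 0, ∃ K ≥ 0, ∀ t, |f t| ≤ ε * |t| + K + |w t|) :
    Tendsto (fun t => |f t| / |t|) l (𝓝 0) := by
  rw [Metric.tendsto_nhds]
  intro ε hε
  obtain ⟨K, hK0, hK⟩ := hb (ε/4) (by positivity)
  have e1 : ∀ᶠ t in l, (1:ℝ) ≤ |t| := hl.eventually (eventually_ge_atTop 1)
  have e2 : ∀ᶠ t in l, K / |t| < ε/4 :=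
    (tendsto_const_nhds.div_atTop hl).eventually_lt_const (by positivity)
  have e3 : ∀ᶠ t in l, |w t| / |t| < ε/4 := hw.eventually_lt_const (by positivity)
  filter_upwards [e1, e2, e3] with t h1 h2 h3
  have ht : 0 < |t| := by linarith
  rw [Real.dist_eq, sub_zero, abs_of_nonneg (by positivity)]
  have key : |f t| / |t| ≤ (ε/4 * |t| + K + |w t|) / |t| :=
    (div_le_div_iff_of_pos_right ht).2 (hK t)
  have heq : (ε/4 * |t| + K + |w t|) / |t| = ε/4 + K/|t| + |w t|/|t| := by
    field_simp
  rw [heq] at key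
  linarith

end OUAux

/-- For `ω : ℝ → ℝ` continuous with sublinear growth, the function
`z(t) = -∫_{-∞}^0 e^τ ω(τ+t) dτ + ω(t)` has sublinear growth:
`lim_{t → ±∞} |z t| / |t| = 0`. -/
theorem ou_stationary_sublinear (ω : ℝ → ℝ) (hcont : Continuous ω)
    (hsubTop : Tendsto (fun t => |ω t| / |t|) atTop (𝓝 0))
    (hsubBot : Tendsto (fun t => |ω t| / |t|) atBot (𝓝 0))
    (z : ℝ → ℝ)
    (hz : ∀ t, z t = -(∫ τ in Set.Iic (0 : ℝ), Real.exp τ * ω (τ + t)) + ω t) :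
    Tendsto (fun t => |z t| / |t|) atTop (𝓝 0) ∧
      Tendsto (fun t => |z t| / |t|) atBot (𝓝 0) := by
  have hb : ∀ ε > 0, ∃ K ≥ 0, ∀ t, |z t| ≤ ε * |t| + K + |ω t| := by
    intro ε hε
    obtain ⟨C, hC, hbC⟩ := ou_sublin_bound ω hcont hsubTop hsubBot hε
    obtain ⟨K, hK0, hK⟩ := ou_integral_bound ω hcont hε hC hbC
    refine ⟨K, hK0, fun t => ?_⟩
    have h1 : |z t| ≤ |∫ τ in Set.Iic (0:ℝ), Real.exp τ * ω (τ + t)| + |ω t| := by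
      rw [hz t]
      calc |-(∫ τ in Set.Iic (0:ℝ), Real.exp τ * ω (τ + t)) + ω t|
          ≤ |-(∫ τ in Set.Iic (0:ℝ), Real.exp τ * ω (τ + t))| + |ω t| := abs_add_le _ _
        _ = |∫ τ in Set.Iic (0:ℝ), Real.exp τ * ω (τ + t)| + |ω t| := by rw [abs_neg]
    linarith [hK t]
  exact ⟨ou_tendsto_aux z ω atTop tendsto_abs_atTop_atTop hsubTop hb,
    ou_tendsto_aux z ω atBot tendsto_abs_atBot_atTop hsubBot hb⟩
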